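/- Intertwining of backprojection operators: let g : ℝ × ℝ → ℝ be continuous, 2π-periodic in its first argument, and compactly supported in its second argument. For z ∈ ℂ with |z| < 1, define the hyperbolic footprint map π_H(z,θ) := (θ + π + 2·arg(1 − z·e^{−iθ}), 2·Im(z·e^{−iθ})/(1 − |z|²)), and for w ∈ ℂ with |w| < 1 define α(w,φ) := arcsin(Im(w·e^{−iφ})). Then ∫₀^{2π} g(π_H(z,θ)) dθ = √(1 − |Φ(z)|²) · ∫₀^{2π} g( φ − π − α(Φ(z),φ), tan α(Φ(z),φ) ) · (cos α(Φ(z),φ))^{−2} dφ. In operator form, (I₀^H)♯ = Φ* ∘ d^{1/2} (I₀^E)♯ μ^{−2} ∘ Ψ^{−*}, where (I₀^H)♯ and (I₀^E)♯ are the hyperbolic and Euclidean backprojection operators and Ψ(β,a) = (β, arctan a). -/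

import Mathlib

open MeasureTheory

noncomputable section

/-- Hyperbolic footprint map: `π_H(z,θ)` gives the horocyclic coordinates `(β,a)` of the
hyperbolic geodesic through the unit tangent vector `(z,θ)`:
`β = θ + π + 2·arg(1 − z·e^{−iθ})`, `a = 2·Im(z·e^{−iθ})/(1 − |z|²)`. -/
def πH (z : ℂ) (θ : ℝ) : ℝ × ℝ :=
  (θ + Real.pi + 2 * Complex.arg (1 - z * Complex.exp (-Complex.I * (θ : ℂ))),
   2 * (z * Complex.exp (-Complex.I * (θ : ℂ))).im / (1 - ‖z‖ ^ 2))

/-- Fan-beam angle of the Euclidean line through `w` with direction `e^{iφ}`: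
`α(w,φ) = arcsin(Im(w·e^{−iφ}))`. -/
def αE (w : ℂ) (φ : ℝ) : ℝ := Real.arcsin ((w * Complex.exp (-Complex.I * (φ : ℂ))).im)

/-- The projective map `Φ(z) = 2z/(1+|z|²)`. -/
def Φm (z : ℂ) : ℂ := 2 * z / (((1 + ‖z‖ ^ 2 : ℝ)) : ℂ)

/-!
Substitute `φ = β + π + arctan a`, where `(β, a) = π_H(z, θ)`. With `U = z e^{-iθ}` one has
`Φ(z) e^{-iφ} = P e^{-i arctan a}` for `P = Φ(U) · conj(1 - U)/(1 - U)`, and `1 + P` is a positive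
multiple of the Cayley transform `(1 + U)/(1 - U) ∝ (1 - |U|²) + 2i Im U`. So `P` lies on the line
through `-1` of slope `a`, which is exactly `Im(Φ(z) e^{-iφ}) = sin(arctan a)`, i.e.
`α(Φ(z), φ) = arctan a`. The Jacobian `dφ/dθ = (1 + |z|²)/((1 - |z|²)(1 + a²))` cancels the weights
`√(1 - |Φ(z)|²) = (1 - |z|²)/(1 + |z|²)` and `cos⁻² α = 1 + a²`, and since `φ` advances by `2π`
with `θ`, periodicity moves the substituted integral back to `[0, 2π]`.
-/

open Complex ComplexConjugate
open scoped Real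

theorem Function.Periodic.intervalIntegral_comp_mul_deriv {f F F' : ℝ → ℝ} {T a b : ℝ}
    (hf : Function.Periodic f T) (hfc : Continuous f)
    (hF : ∀ x ∈ Set.uIcc a b, HasDerivAt F (F' x) x) (hF' : ContinuousOn F' (Set.uIcc a b))
    (hFab : F b = F a + T) :
    ∫ x in a..b, f (F x) * F' x = ∫ x in 0..T, f x := by
  have hshift := hf.intervalIntegral_add_eq (F a) 0
  rw [zero_add, ← hFab] at hshift
  rw [← hshift, ← intervalIntegral.integral_comp_mul_deriv hF hF' hfc]
  rfl

lemma HasDerivAt.complex_im {f : ℝ → ℂ} {f' : ℂ} {x : ℝ} (h : HasDerivAt f f' x) :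
    HasDerivAt (fun t => (f t).im) f'.im x :=
  imCLM.hasFDerivAt.comp_hasDerivAt x h

lemma exp_neg_I_mul_add_two_pi (θ : ℝ) :
    cexp (-I * ↑(θ + 2 * π)) = cexp (-I * θ) := by
  rw [show -I * ↑(θ + 2 * π) = -I * θ - 2 * π * I by push_cast; ring, exp_periodic.sub_eq]

lemma norm_mul_exp_neg_I_mul (z : ℂ) (θ : ℝ) : ‖z * cexp (-I * θ)‖ = ‖z‖ := by
  simp [norm_exp]

lemma hasDerivAt_mul_exp_neg_I_mul (z : ℂ) (θ : ℝ) :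
    HasDerivAt (fun t : ℝ => z * cexp (-I * t)) (-I * (z * cexp (-I * θ))) θ := by
  have := (((hasDerivAt_id (θ : ℂ)).const_mul (-I)).cexp.const_mul z).comp_ofReal
  simpa [mul_comm, mul_left_comm] using this

lemma exp_neg_I_mul_two_arg {v : ℂ} (hv : v ≠ 0) : cexp (-I * ↑(2 * arg v)) = conj v / v := by
  have hv' : (‖v‖ : ℂ) ≠ 0 := by exact_mod_cast norm_ne_zero_iff.2 hv
  have he : cexp (↑(arg v) * I) = v / ‖v‖ := by
    rw [eq_div_iff hv', mul_comm, norm_mul_exp_arg_mul_I]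
  rw [show -I * ↑(2 * arg v) = -(↑(arg v) * I) + -(↑(arg v) * I) by push_cast; ring, exp_add,
    exp_neg, he]
  field_simp
  exact (mul_conj' v).symm

lemma norm_Φm (z : ℂ) : ‖Φm z‖ = 2 * ‖z‖ / (1 + ‖z‖ ^ 2) := by
  rw [Φm, norm_div, norm_mul, norm_real, Real.norm_of_nonneg (by positivity)]
  norm_num

lemma norm_Φm_lt_one {z : ℂ} (hz : ‖z‖ ≠ 1) : ‖Φm z‖ < 1 := by
  rw [norm_Φm, div_lt_one (by positivity)]
  have : 0 < (1 - ‖z‖) ^ 2 := sq_pos_of_ne_zero (sub_ne_zero.2 hz.symm)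
  linarith

lemma sqrt_one_sub_norm_Φm_sq {z : ℂ} (hz : ‖z‖ ≤ 1) :
    √(1 - ‖Φm z‖ ^ 2) = (1 - ‖z‖ ^ 2) / (1 + ‖z‖ ^ 2) := by
  have : 0 ≤ 1 - ‖z‖ ^ 2 := by nlinarith [norm_nonneg z]
  rw [← Real.sqrt_sq (by positivity : 0 ≤ (1 - ‖z‖ ^ 2) / (1 + ‖z‖ ^ 2)), norm_Φm]
  congr 1
  field_simp
  ring

lemma Φm_mul_exp_neg_I_mul (z : ℂ) (θ : ℝ) : Φm z * cexp (-I * θ) = Φm (z * cexp (-I * θ)) := by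
  rw [Φm, Φm, norm_mul_exp_neg_I_mul]; ring

lemma one_add_mul_conj_one_sub (U : ℂ) :
    (1 + U) * conj (1 - U) = ((1 - ‖U‖ ^ 2 : ℝ) : ℂ) + ((2 * U.im : ℝ) : ℂ) * I := by
  apply Complex.ext <;> simp [← normSq_eq_norm_sq, normSq_apply] <;> ring

lemma one_add_Φm_mul_conj_div (U : ℂ) (hU : U ≠ 1) :
    1 + Φm U * (conj (1 - U) / (1 - U)) =
      ((1 - ‖U‖ ^ 2) / ((1 + ‖U‖ ^ 2) * ‖1 - U‖ ^ 2) : ℝ) * ((1 + U) * conj (1 - U)) := by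
  have h1 : (1 : ℂ) - U ≠ 0 := sub_ne_zero.2 hU.symm
  have h2 : (1 : ℂ) - conj U ≠ 0 := by simpa using (map_ne_zero (starRingEnd ℂ)).2 h1
  have h3 : (1 : ℂ) + U * conj U ≠ 0 := by
    rw [mul_conj']; exact_mod_cast (by positivity : (0:ℝ) < 1 + ‖U‖ ^ 2).ne'
  rw [Φm]
  push_cast
  rw [← mul_conj', ← mul_conj', map_sub, map_one]
  field_simp
  ring

lemma im_Φm_mul_conj_div (U : ℂ) (hU : ‖U‖ ≠ 1) :
    (Φm U * (conj (1 - U) / (1 - U))).im =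
      2 * U.im / (1 - ‖U‖ ^ 2) * (1 + (Φm U * (conj (1 - U) / (1 - U))).re) := by
  have hU1 : U ≠ 1 := by rintro rfl; simp at hU
  have hr : 1 - ‖U‖ ^ 2 ≠ 0 := by
    rw [sub_ne_zero]; intro h; apply hU; nlinarith [norm_nonneg U]
  obtain ⟨c, hc⟩ : ∃ c : ℝ, 1 + Φm U * (conj (1 - U) / (1 - U)) =
      c * (((1 - ‖U‖ ^ 2 : ℝ) : ℂ) + ((2 * U.im : ℝ) : ℂ) * I) :=
    ⟨_, (one_add_Φm_mul_conj_div U hU1).trans (by rw [one_add_mul_conj_one_sub])⟩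
  generalize Φm U * (conj (1 - U) / (1 - U)) = P at hc ⊢
  have him := congrArg Complex.im hc
  have hre := congrArg Complex.re hc
  simp only [add_im, one_im, zero_add, add_re, one_re, mul_re,
    mul_im, ofReal_re, ofReal_im, I_re, I_im] at him hre
  rw [him, hre]
  field_simp
  ring

lemma im_mul_exp_neg_I_arctan {P : ℂ} {a : ℝ} (h : P.im = a * (1 + P.re)) :
    (P * cexp (-I * Real.arctan a)).im = Real.sin (Real.arctan a) := by
  have hsin : a * Real.cos (Real.arctan a) = Real.sin (Real.arctan a) := by
    rw [← Real.tan_mul_cos (Real.cos_arctan_pos a).ne', Real.tan_arctan]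
  simp only [mul_im, exp_re, exp_im, neg_mul, neg_re, neg_im, mul_re, I_re, I_im, ofReal_re,
    ofReal_im, zero_mul, mul_zero, sub_self, neg_zero, Real.exp_zero, one_mul, zero_add,
    Real.sin_neg, mul_neg, Real.cos_neg]
  rw [h, ← hsin]
  ring

lemma πH_add_two_pi (z : ℂ) (θ : ℝ) :
    πH z (θ + 2 * π) = ((πH z θ).1 + 2 * π, (πH z θ).2) := by
  simp only [πH, exp_neg_I_mul_add_two_pi, Prod.mk.injEq, and_true]
  ring

lemma continuous_πH_snd (z : ℂ) : Continuous fun θ => (πH z θ).2 := by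
  unfold πH; fun_prop

lemma hasDerivAt_arg_one_sub_mul_exp {z : ℂ} (hz : ‖z‖ < 1) (θ : ℝ) :
    HasDerivAt (fun t : ℝ => arg (1 - z * cexp (-I * t)))
      (z * cexp (-I * θ) / (1 - z * cexp (-I * θ))).re θ := by
  have hmem : 1 - z * cexp (-I * θ) ∈ slitPlane := Or.inl <| by
    simpa using (re_le_norm _).trans_lt ((norm_mul_exp_neg_I_mul z θ).trans_lt hz)
  have h := (((hasDerivAt_mul_exp_neg_I_mul z θ).const_sub 1).clog_real hmem).complex_im
  simp only [log_im] at h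
  convert h using 1
  simp only [neg_mul, neg_neg, mul_div_assoc, I_mul_im]

/-- `(β, arctan a) = Ψ(π_H(z, θ))`, read as fan-beam coordinates `(β, α)`, is the Euclidean line
with direction `e^{iφ}` for `φ = β + π + α`; this `φ` is the substitution variable. -/
def euclideanDirection (z : ℂ) (θ : ℝ) : ℝ := (πH z θ).1 + π + Real.arctan (πH z θ).2

lemma euclideanDirection_add_two_pi (z : ℂ) (θ : ℝ) :
    euclideanDirection z (θ + 2 * π) = euclideanDirection z θ + 2 * π := by
  simp only [euclideanDirection, πH_add_two_pi]; ring

lemma αE_Φm_euclideanDirection {z : ℂ} (hz : ‖z‖ < 1) (θ : ℝ) :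
    αE (Φm z) (euclideanDirection z θ) = Real.arctan (πH z θ).2 := by
  set U := z * cexp (-I * θ)
  have hUz : ‖U‖ = ‖z‖ := norm_mul_exp_neg_I_mul z θ
  have hU1 : 1 - U ≠ 0 := sub_ne_zero.2 fun h => by simp [← h] at hUz; linarith
  have ha : (πH z θ).2 = 2 * U.im / (1 - ‖U‖ ^ 2) := by rw [hUz]; rfl
  have hrot : Φm z * cexp (-I * ↑(euclideanDirection z θ)) =
      Φm U * (conj (1 - U) / (1 - U)) * cexp (-I * ↑(Real.arctan (πH z θ).2)) := by
    rw [show -I * ↑(euclideanDirection z θ) = -I * θ + -I * ↑(2 * arg (1 - U)) +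
        -I * ↑(Real.arctan (πH z θ).2) - 2 * π * I by
          simp only [euclideanDirection, πH]; push_cast; ring,
      exp_periodic.sub_eq, exp_add, exp_add, ← mul_assoc, ← mul_assoc, Φm_mul_exp_neg_I_mul,
      exp_neg_I_mul_two_arg hU1]
  rw [αE, hrot, ha, im_mul_exp_neg_I_arctan (im_Φm_mul_conj_div U (hUz.trans_lt hz).ne),
    Real.arcsin_sin (Real.neg_pi_div_two_lt_arctan _).le (Real.arctan_lt_pi_div_two _).le]

lemma hasDerivAt_euclideanDirection {z : ℂ} (hz : ‖z‖ < 1) (θ : ℝ) :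
    HasDerivAt (euclideanDirection z)
      ((1 + ‖z‖ ^ 2) / ((1 - ‖z‖ ^ 2) * (1 + (πH z θ).2 ^ 2))) θ := by
  have h := ((((hasDerivAt_id θ).add_const π).add
    ((hasDerivAt_arg_one_sub_mul_exp hz θ).const_mul 2)).add_const π).add
    (((hasDerivAt_mul_exp_neg_I_mul z θ).complex_im.const_mul 2).div_const (1 - ‖z‖ ^ 2)).arctan
  refine h.congr_deriv ?_
  change _ = (1 + ‖z‖ ^ 2) /
    ((1 - ‖z‖ ^ 2) * (1 + (2 * (z * cexp (-I * θ)).im / (1 - ‖z‖ ^ 2)) ^ 2))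
  have hXY : (z * cexp (-I * θ)).re ^ 2 + (z * cexp (-I * θ)).im ^ 2 = ‖z‖ ^ 2 := by
    rw [← norm_mul_exp_neg_I_mul z θ, ← normSq_eq_norm_sq, normSq_apply]; ring
  generalize z * cexp (-I * θ) = U at hXY ⊢
  have hr : 0 < 1 - ‖z‖ ^ 2 := by nlinarith [norm_nonneg z]
  have hD : 0 < (1 - U.re) ^ 2 + U.im ^ 2 := by nlinarith
  have hre : (U / (1 - U)).re = (U.re - ‖z‖ ^ 2) / ((1 - U.re) ^ 2 + U.im ^ 2) := by
    rw [div_re, normSq_apply, ← hXY]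
    simp only [sub_re, one_re, sub_im, one_im, zero_sub, mul_neg, neg_mul, neg_neg]
    ring
  have him : (-I * U).im = -U.re := by simp
  rw [hre, him, ← hXY]
  rw [← hXY] at hr
  field_simp
  ring

lemma αE_add_two_pi (w : ℂ) (φ : ℝ) : αE w (φ + 2 * π) = αE w φ := by
  rw [αE, αE, exp_neg_I_mul_add_two_pi]

lemma continuous_αE (w : ℂ) : Continuous (αE w) := by
  unfold αE; fun_prop

lemma cos_αE_pos {w : ℂ} (hw : ‖w‖ < 1) (φ : ℝ) : 0 < Real.cos (αE w φ) := by
  have h := (abs_im_le_norm _).trans_lt ((norm_mul_exp_neg_I_mul w φ).trans_lt hw)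
  rw [abs_lt] at h
  exact Real.cos_pos_of_mem_Ioo ⟨Real.neg_pi_div_two_lt_arcsin.2 h.1,
    Real.arcsin_lt_pi_div_two.2 h.2⟩

def fanBeamIntegrand (g : ℝ × ℝ → ℝ) (w : ℂ) (φ : ℝ) : ℝ :=
  g (φ - π - αE w φ, Real.tan (αE w φ)) / Real.cos (αE w φ) ^ 2

lemma periodic_fanBeamIntegrand {g : ℝ × ℝ → ℝ} (hg : ∀ β a, g (β + 2 * π, a) = g (β, a))
    (w : ℂ) : Function.Periodic (fanBeamIntegrand g w) (2 * π) := fun φ => by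
  rw [fanBeamIntegrand, fanBeamIntegrand, αE_add_two_pi,
    show φ + 2 * π - π - αE w φ = φ - π - αE w φ + 2 * π by ring, hg]

lemma continuous_fanBeamIntegrand {g : ℝ × ℝ → ℝ} (hg : Continuous g) {w : ℂ} (hw : ‖w‖ < 1) :
    Continuous (fanBeamIntegrand g w) := by
  have hα := continuous_αE w
  have hcos : ∀ φ, Real.cos (αE w φ) ≠ 0 := fun φ => (cos_αE_pos hw φ).ne'
  have htan : Continuous fun φ => Real.tan (αE w φ) := continuous_iff_continuousAt.2 fun φ =>
    (Real.continuousAt_tan.2 (hcos φ)).comp hα.continuousAt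
  exact .div (hg.comp (by fun_prop)) (by fun_prop) fun φ => pow_ne_zero 2 (hcos φ)

lemma fanBeamIntegrand_Φm_euclideanDirection (g : ℝ × ℝ → ℝ) {z : ℂ} (hz : ‖z‖ < 1) (θ : ℝ) :
    fanBeamIntegrand g (Φm z) (euclideanDirection z θ) = g (πH z θ) * (1 + (πH z θ).2 ^ 2) := by
  rw [fanBeamIntegrand, αE_Φm_euclideanDirection hz, Real.tan_arctan, Real.cos_sq_arctan,
    euclideanDirection, add_right_comm _ π, add_sub_cancel_right, add_sub_cancel_right,
    div_div_eq_mul_div, div_one]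

theorem backprojection_intertwining_general (g : ℝ × ℝ → ℝ) (hg : Continuous g)
    (hper : ∀ β a : ℝ, g (β + 2 * Real.pi, a) = g (β, a))
    (z : ℂ) (hz : ‖z‖ < 1) :
    (∫ θ in (0 : ℝ)..(2 * Real.pi), g (πH z θ)) =
      Real.sqrt (1 - ‖Φm z‖ ^ 2) *
        ∫ φ in (0 : ℝ)..(2 * Real.pi),
          g (φ - Real.pi - αE (Φm z) φ, Real.tan (αE (Φm z) φ)) /
            Real.cos (αE (Φm z) φ) ^ 2 := by
  have hr : 0 < 1 - ‖z‖ ^ 2 := by nlinarith [norm_nonneg z]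
  set J : ℝ → ℝ := fun θ => (1 + ‖z‖ ^ 2) / ((1 - ‖z‖ ^ 2) * (1 + (πH z θ).2 ^ 2))
  have hJ : Continuous J := continuous_const.div
    (continuous_const.mul (continuous_const.add ((continuous_πH_snd z).pow 2)))
    fun θ => mul_ne_zero hr.ne' (by positivity)
  have hpoint : ∀ θ, g (πH z θ) =
      √(1 - ‖Φm z‖ ^ 2) * (fanBeamIntegrand g (Φm z) (euclideanDirection z θ) * J θ) := by
    intro θ
    rw [sqrt_one_sub_norm_Φm_sq hz.le, fanBeamIntegrand_Φm_euclideanDirection g hz]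
    simp only [J]
    field_simp
  calc (∫ θ in (0 : ℝ)..(2 * π), g (πH z θ))
      = √(1 - ‖Φm z‖ ^ 2) *
          ∫ θ in (0 : ℝ)..(2 * π), fanBeamIntegrand g (Φm z) (euclideanDirection z θ) * J θ := by
        simp_rw [hpoint, intervalIntegral.integral_const_mul]
    _ = _ := by
        rw [(periodic_fanBeamIntegrand hper _).intervalIntegral_comp_mul_deriv
          (continuous_fanBeamIntegrand hg (norm_Φm_lt_one hz.ne))
          (fun θ _ => hasDerivAt_euclideanDirection hz θ) hJ.continuousOn
          (by simpa using euclideanDirection_add_two_pi z 0)]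
        rfl

/-- Intertwining of backprojection operators
(`(I₀^H)♯ = Φ* ∘ d^{1/2} (I₀^E)♯ μ^{−2} ∘ Ψ^{−*}`): for `g : ℝ × ℝ → ℝ` continuous,
`2π`-periodic in its first argument and compactly supported in its second argument,
and `|z| < 1`,
`∫₀^{2π} g(π_H(z,θ)) dθ = √(1 − |Φ(z)|²) ·
  ∫₀^{2π} g(φ − π − α(Φ(z),φ), tan α(Φ(z),φ)) · (cos α(Φ(z),φ))^{−2} dφ`. -/
theorem backprojection_intertwining (g : ℝ × ℝ → ℝ) (hg : Continuous g)
    (hper : ∀ β a : ℝ, g (β + 2 * Real.pi, a) = g (β, a))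
    (hsupp : ∃ M : ℝ, ∀ β a : ℝ, M ≤ |a| → g (β, a) = 0)
    (z : ℂ) (hz : ‖z‖ < 1) :
    (∫ θ in (0 : ℝ)..(2 * Real.pi), g (πH z θ)) =
      Real.sqrt (1 - ‖Φm z‖ ^ 2) *
        ∫ φ in (0 : ℝ)..(2 * Real.pi),
          g (φ - Real.pi - αE (Φm z) φ, Real.tan (αE (Φm z) φ)) /
            Real.cos (αE (Φm z) φ) ^ 2 :=
  backprojection_intertwining_general g hg hper z hz
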